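/- Every multisector S = (∏_{j=1}^k I_j × [0, r_j)) × W in the real oriented blow-up (S¹ × ℝ_{≥0})^k × ℂ^{n−k}, where each I_j is an open arc of S¹ and W is open in ℂ^{n−k}, is an open connected subset; moreover for any (r, τ) ∈ ℝ_{>0}², there exists a finite family {S_m}_{m∈K} of multisectors small with respect to (r, τ) such that every intersection ∩_{l∈L}S_l (L ⊆ K) is a multisector small with respect to (r, τ) and ∪_{m∈K} S_m is an open neighborhood of the boundary {0}^k-fiber π^{−1}(Z). -/
import Mathlib


open Set

/-- The local model of the real oriented blow-up `(S¹ × ℝ_{≥0})^k × ℂ^{n−k}` of `ℂⁿ`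
along the components of `{x₁⋯x_k = 0}` (here `m = n − k`). -/
abbrev Blowup (k m : ℕ) := (Fin k → Circle × NNReal) × (Fin m → ℂ)

/-- The open arc `{e^{iθ} : θ ∈ (a,b)}` of the unit circle. -/
def Arc (a b : ℝ) : Set Circle := {z | ∃ θ ∈ Set.Ioo a b, Circle.exp θ = z}

/-- A multisector `S = (∏_j I_j × [0,r_j)) × W`, where each `I_j` is an open arc and `W` is
an open (connected) neighborhood of `0` in `ℂ^{n−k}`. -/
def IsMultisector {k m : ℕ} (S : Set (Blowup k m)) : Prop :=
  ∃ (a b r : Fin k → ℝ) (W : Set (Fin m → ℂ)),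
    (∀ j, a j < b j) ∧ (∀ j, 0 < r j) ∧ IsOpen W ∧ 0 ∈ W ∧ IsPreconnected W ∧
    S = {p | (∀ j, (p.1 j).1 ∈ Arc (a j) (b j) ∧ ((p.1 j).2 : ℝ) < r j) ∧ p.2 ∈ W}

/-- A multisector small with respect to `(r, τ)`: the arcs have length `< τ`, the radial
extents are `< r` and `W` is contained in the ball of radius `r`. -/
def IsSmallMultisector {k m : ℕ} (r τ : ℝ) (S : Set (Blowup k m)) : Prop :=
  ∃ (a b ρ : Fin k → ℝ) (W : Set (Fin m → ℂ)),
    (∀ j, a j < b j) ∧ (∀ j, 0 < ρ j) ∧ IsOpen W ∧ 0 ∈ W ∧ IsPreconnected W ∧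
    (∀ j, b j - a j < τ) ∧ (∀ j, ρ j < r) ∧ (∀ x ∈ W, ‖x‖ < r) ∧
    S = {p | (∀ j, (p.1 j).1 ∈ Arc (a j) (b j) ∧ ((p.1 j).2 : ℝ) < ρ j) ∧ p.2 ∈ W}

/-! ### Auxiliary lemmas -/

lemma arc_eq_image (a b : ℝ) : Arc a b = Circle.exp '' Set.Ioo a b := rfl

lemma isOpen_arc (a b : ℝ) : IsOpen (Arc a b) := by
  rw [arc_eq_image]; exact isLocalHomeomorph_circleExp.isOpenMap _ isOpen_Ioo

lemma isPreconnected_arc (a b : ℝ) : IsPreconnected (Arc a b) := by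
  rw [arc_eq_image]
  exact isPreconnected_Ioo.image _ Circle.exp.continuous.continuousOn

open Real in
/-- The intersection of two arcs of length `≤ ε < π` is empty or an arc of length `≤ ε`. -/
lemma arc_inter {ε a b a' b' : ℝ} (hεπ : ε < π) (hab : a < b) (hab' : a' < b')
    (h1 : b - a ≤ ε) (h2 : b' - a' ≤ ε)
    (hne : (Arc a b ∩ Arc a' b').Nonempty) :
    ∃ a'' b'', a'' < b'' ∧ b'' - a'' ≤ ε ∧ Arc a b ∩ Arc a' b' = Arc a'' b'' := by
  obtain ⟨z, ⟨θ, hθ, hθz⟩, ⟨θ', hθ', hθ'z⟩⟩ := hne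
  obtain ⟨n, hn⟩ := Circle.exp_eq_exp.1 (hθz.trans hθ'z.symm)
  set t : ℝ := (n : ℝ) * (2 * π) with ht
  have hshift : Arc (a' + t) (b' + t) = Arc a' b' := by
    ext w
    constructor
    · rintro ⟨ψ, hψ, rfl⟩
      exact ⟨ψ - t, ⟨by linarith [hψ.1], by linarith [hψ.2]⟩,
        Circle.exp_eq_exp.2 ⟨-n, by push_cast; ring⟩⟩
    · rintro ⟨ψ, hψ, rfl⟩
      exact ⟨ψ + t, ⟨by linarith [hψ.1], by linarith [hψ.2]⟩,
        Circle.exp_eq_exp.2 ⟨n, by ring⟩⟩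
  have hθmem : θ ∈ Set.Ioo (a' + t) (b' + t) :=
    ⟨by rw [hn]; linarith [hθ'.1], by rw [hn]; linarith [hθ'.2]⟩
  have h3 : max a (a' + t) < θ := max_lt hθ.1 hθmem.1
  have h4 : θ < min b (b' + t) := lt_min hθ.2 hθmem.2
  refine ⟨max a (a' + t), min b (b' + t), h3.trans h4, ?_, ?_⟩
  · have := min_le_left b (b' + t)
    have := le_max_left a (a' + t)
    linarith
  · rw [← hshift]
    ext w
    constructor
    · rintro ⟨⟨σ, hσ, rfl⟩, ⟨σ', hσ', hσ'z⟩⟩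
      obtain ⟨l, hl⟩ := Circle.exp_eq_exp.1 hσ'z
      have h2π : (0:ℝ) < 2 * π := by positivity
      have e1 : |σ - θ| < ε := by
        rw [abs_sub_lt_iff]
        exact ⟨by linarith [hσ.1, hσ.2, hθ.1, hθ.2], by linarith [hσ.1, hσ.2, hθ.1, hθ.2]⟩
      have e2 : |σ' - θ| < ε := by
        rw [abs_sub_lt_iff]
        exact ⟨by linarith [hσ'.1, hσ'.2, hθmem.1, hθmem.2],
          by linarith [hσ'.1, hσ'.2, hθmem.1, hθmem.2]⟩
      have e3 : |(l : ℝ) * (2 * π)| < 2 * π := by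
        rw [show (l : ℝ) * (2 * π) = σ' - σ by rw [hl]; ring]
        calc |σ' - σ| ≤ |σ' - θ| + |θ - σ| := abs_sub_le _ _ _
          _ < ε + ε := by rw [abs_sub_comm θ σ]; linarith
          _ < 2 * π := by linarith
      have e4 : |(l : ℝ)| < 1 := by
        rw [abs_mul, abs_of_pos h2π] at e3
        nlinarith [abs_nonneg ((l : ℝ))]
      have e5 : l = 0 := by
        have h7 : |l| < 1 := by exact_mod_cast (by rwa [Int.cast_abs] : ((|l| : ℤ) : ℝ) < 1)
        rw [abs_lt] at h7
        omega
      have hσσ' : σ' = σ := by rw [hl, e5]; push_cast; ring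
      exact ⟨σ, ⟨max_lt hσ.1 (hσσ' ▸ hσ'.1), lt_min hσ.2 (hσσ' ▸ hσ'.2)⟩, rfl⟩
    · rintro ⟨ψ, hψ, rfl⟩
      exact ⟨⟨ψ, ⟨lt_of_le_of_lt (le_max_left _ _) hψ.1,
          lt_of_lt_of_le hψ.2 (min_le_left _ _)⟩, rfl⟩,
        ⟨ψ, ⟨lt_of_le_of_lt (le_max_right _ _) hψ.1,
          lt_of_lt_of_le hψ.2 (min_le_right _ _)⟩, rfl⟩⟩

/-- The basic sector set. -/
def Sector {k m : ℕ} (a b ρ : Fin k → ℝ) (W : Set (Fin m → ℂ)) : Set (Blowup k m) :=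
  {p | (∀ j, (p.1 j).1 ∈ Arc (a j) (b j) ∧ ((p.1 j).2 : ℝ) < ρ j) ∧ p.2 ∈ W}

lemma sector_eq_prod {k m : ℕ} (a b ρ : Fin k → ℝ) (W : Set (Fin m → ℂ)) :
    Sector a b ρ W =
      (Set.univ.pi fun j => Arc (a j) (b j) ×ˢ {x : NNReal | (x : ℝ) < ρ j}) ×ˢ W := by
  ext p
  simp only [Sector, Set.mem_setOf_eq, Set.mem_prod, Set.mem_pi, Set.mem_univ, forall_true_left]

lemma isOpen_sector {k m : ℕ} (a b ρ : Fin k → ℝ) {W : Set (Fin m → ℂ)} (hW : IsOpen W) :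
    IsOpen (Sector a b ρ W) := by
  rw [sector_eq_prod]
  exact (isOpen_set_pi Set.finite_univ fun j _ =>
    (isOpen_arc _ _).prod (isOpen_lt NNReal.continuous_coe continuous_const)).prod hW

lemma isPreconnected_sector {k m : ℕ} (a b ρ : Fin k → ℝ) {W : Set (Fin m → ℂ)}
    (hW : IsPreconnected W) : IsPreconnected (Sector a b ρ W) := by
  rw [sector_eq_prod]
  refine (isPreconnected_univ_pi fun j => (isPreconnected_arc _ _).prod ?_).prod hW
  have h : {x : NNReal | (x : ℝ) < ρ j} = Set.Iio (Real.toNNReal (ρ j)) := by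
    ext x; exact (Real.lt_toNNReal_iff_coe_lt).symm
  rw [h]
  exact isPreconnected_Iio

lemma sector_inter_eq {k m : ℕ} (a b a' b' a'' b'' ρ : Fin k → ℝ) (W : Set (Fin m → ℂ))
    (h : ∀ j, Arc (a j) (b j) ∩ Arc (a' j) (b' j) = Arc (a'' j) (b'' j)) :
    Sector a b ρ W ∩ Sector a' b' ρ W = Sector a'' b'' ρ W := by
  ext p
  simp only [Sector, Set.mem_inter_iff, Set.mem_setOf_eq]
  constructor
  · rintro ⟨⟨h1, hW⟩, h2, -⟩
    refine ⟨fun j => ⟨?_, (h1 j).2⟩, hW⟩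
    rw [← h j]; exact ⟨(h1 j).1, (h2 j).1⟩
  · rintro ⟨h1, hW⟩
    have key : ∀ j, (p.1 j).1 ∈ Arc (a j) (b j) ∩ Arc (a' j) (b' j) := fun j => by
      rw [h j]; exact (h1 j).1
    exact ⟨⟨fun j => ⟨(key j).1, (h1 j).2⟩, hW⟩, fun j => ⟨(key j).2, (h1 j).2⟩, hW⟩

open Real in
lemma sector_pair {k m : ℕ} {ε : ℝ} (hεπ : ε < π) {a b a' b' ρ : Fin k → ℝ}
    {W : Set (Fin m → ℂ)}
    (ha : ∀ j, a j < b j ∧ b j - a j ≤ ε) (ha' : ∀ j, a' j < b' j ∧ b' j - a' j ≤ ε) :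
    Sector a b ρ W ∩ Sector a' b' ρ W = ∅ ∨
      ∃ a'' b'' : Fin k → ℝ, (∀ j, a'' j < b'' j ∧ b'' j - a'' j ≤ ε) ∧
        Sector a b ρ W ∩ Sector a' b' ρ W = Sector a'' b'' ρ W := by
  by_cases h : ∀ j, (Arc (a j) (b j) ∩ Arc (a' j) (b' j)).Nonempty
  · choose a'' b'' h1 h2 h3 using fun j =>
      arc_inter hεπ (ha j).1 (ha' j).1 (ha j).2 (ha' j).2 (h j)
    exact Or.inr ⟨a'', b'', fun j => ⟨h1 j, h2 j⟩, sector_inter_eq _ _ _ _ _ _ _ _ h3⟩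
  · left
    push_neg at h
    obtain ⟨j, hj⟩ := h
    rw [Set.eq_empty_iff_forall_notMem]
    rintro p ⟨⟨h1, -⟩, h2, -⟩
    have hmem : (p.1 j).1 ∈ Arc (a j) (b j) ∩ Arc (a' j) (b' j) := ⟨(h1 j).1, (h2 j).1⟩
    rw [hj] at hmem
    exact hmem

open Real in
lemma inter_sectors {k m : ℕ} {ε : ℝ} (hεπ : ε < π) (ρ : Fin k → ℝ) (W : Set (Fin m → ℂ))
    {L : Finset (Set (Blowup k m))} (hL : L.Nonempty) :
    (∀ S ∈ L, ∃ a b : Fin k → ℝ, (∀ j, a j < b j ∧ b j - a j ≤ ε) ∧ S = Sector a b ρ W) →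
    (⋂ S ∈ L, S) = ∅ ∨ ∃ a b : Fin k → ℝ,
      (∀ j, a j < b j ∧ b j - a j ≤ ε) ∧ (⋂ S ∈ L, S) = Sector a b ρ W := by
  induction hL using Finset.Nonempty.cons_induction with
  | singleton S =>
    intro h
    obtain ⟨a, b, hab, heq⟩ := h S (Finset.mem_singleton_self S)
    exact Or.inr ⟨a, b, hab, by rwa [Finset.set_biInter_singleton]⟩
  | cons S L hSL hLne ih =>
    intro h
    obtain ⟨a, b, hab, heq⟩ := h S (Finset.mem_cons_self _ _)
    have hrest := ih fun T hT => h T (Finset.mem_cons_of_mem hT)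
    have hcons : (⋂ T ∈ Finset.cons S L hSL, T) = S ∩ ⋂ T ∈ L, T := by
      classical
      rw [Finset.cons_eq_insert, Finset.set_biInter_insert]
    rw [hcons]
    rcases hrest with hrest | ⟨a', b', hab', heq'⟩
    · rw [hrest, Set.inter_empty]; exact Or.inl rfl
    · rw [heq, heq']
      rcases sector_pair hεπ hab hab' with h' | ⟨a'', b'', hab'', h'⟩
      · exact Or.inl h'
      · exact Or.inr ⟨a'', b'', hab'', h'⟩

open Real in
lemma exists_theta (z : Circle) : ∃ θ ∈ Set.Ioc 0 (2 * π), Circle.exp θ = z := by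
  have h2π : (0:ℝ) < 2 * π := by positivity
  set θ₀ : ℝ := Complex.arg (z : ℂ) with hθ₀
  set n : ℤ := ⌈θ₀ / (2 * π)⌉ with hn
  refine ⟨θ₀ - ((n : ℝ) - 1) * (2 * π), ⟨?_, ?_⟩, ?_⟩
  · have h := Int.ceil_lt_add_one (θ₀ / (2 * π))
    have h' : ((n : ℝ) - 1) * (2 * π) < (θ₀ / (2 * π)) * (2 * π) := by
      apply mul_lt_mul_of_pos_right _ h2π
      rw [hn]; linarith
    rw [div_mul_cancel₀ _ (ne_of_gt h2π)] at h'
    linarith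
  · have h := Int.le_ceil (θ₀ / (2 * π))
    have h' : (θ₀ / (2 * π)) * (2 * π) ≤ (n : ℝ) * (2 * π) :=
      mul_le_mul_of_nonneg_right h (le_of_lt h2π)
    rw [div_mul_cancel₀ _ (ne_of_gt h2π)] at h'
    linarith
  · have heq : Circle.exp (θ₀ - ((n : ℝ) - 1) * (2 * π)) = Circle.exp θ₀ :=
      Circle.exp_eq_exp.2 ⟨-(n - 1), by push_cast; ring⟩
    rw [heq]
    exact Circle.exp_arg z

open Real in
lemma exists_arc_index {ε : ℝ} (hε : 0 < ε) {θ : ℝ} (hθ : θ ∈ Set.Ioc 0 (2 * π)) :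
    ∃ i : ℕ, i < ⌈4 * π / ε⌉₊ ∧ (i : ℝ) * (ε / 2) < θ ∧ θ < (i : ℝ) * (ε / 2) + ε := by
  have hπ : (0:ℝ) < π := Real.pi_pos
  set i₀ : ℤ := ⌈2 * θ / ε⌉ - 1 with hi₀
  have hpos : 0 < 2 * θ / ε := div_pos (by linarith [hθ.1]) hε
  have hi₀0 : 0 ≤ i₀ := by
    have h := Int.ceil_pos.2 hpos
    omega
  have hi₀cast : (i₀ : ℝ) = ((⌈2 * θ / ε⌉ : ℤ) : ℝ) - 1 := by rw [hi₀]; push_cast; ring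
  have hlt : (i₀ : ℝ) < 2 * θ / ε := by
    have h := Int.ceil_lt_add_one (2 * θ / ε)
    rw [hi₀cast]; linarith
  have hle : 2 * θ / ε ≤ (i₀ : ℝ) + 1 := by
    have h := Int.le_ceil (2 * θ / ε)
    rw [hi₀cast]; linarith
  have hN : i₀ < (⌈4 * π / ε⌉₊ : ℤ) := by
    have h1 : 2 * θ / ε ≤ 4 * π / ε :=
      (div_le_div_iff_of_pos_right hε).2 (by linarith [hθ.2])
    have h2 : 2 * θ / ε ≤ ((⌈4 * π / ε⌉₊ : ℤ) : ℝ) := by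
      push_cast
      exact h1.trans (Nat.le_ceil _)
    have h3 : ⌈2 * θ / ε⌉ ≤ (⌈4 * π / ε⌉₊ : ℤ) := Int.ceil_le.2 h2
    omega
  have hcast : ((i₀.toNat : ℕ) : ℝ) = (i₀ : ℝ) := by
    exact_mod_cast Int.toNat_of_nonneg hi₀0
  refine ⟨i₀.toNat, by omega, ?_, ?_⟩
  · rw [hcast]
    have h' : (i₀ : ℝ) * (ε / 2) < (2 * θ / ε) * (ε / 2) :=
      mul_lt_mul_of_pos_right hlt (by positivity)
    have h'' : (2 * θ / ε) * (ε / 2) = θ := by field_simp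
    linarith
  · rw [hcast]
    have h' : (2 * θ / ε) * (ε / 2) ≤ ((i₀ : ℝ) + 1) * (ε / 2) :=
      mul_le_mul_of_nonneg_right hle (by positivity)
    have h'' : (2 * θ / ε) * (ε / 2) = θ := by field_simp
    nlinarith

/-- Every multisector is an open connected subset of the real oriented blow-up; moreover,
for any `(r,τ) ∈ ℝ_{>0}²` there is a finite family of multisectors small with respect to
`(r,τ)` whose pairwise (indeed arbitrary nonempty) intersections are empty or small
multisectors and whose union is an open neighborhood of the boundary `{0}^k`-fiber over the
origin. -/
theorem multisectors_open_connected_and_cover (k m : ℕ) :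
    (∀ S : Set (Blowup k m), IsMultisector S → IsOpen S ∧ IsConnected S) ∧
    (∀ r τ : ℝ, 0 < r → 0 < τ → ∃ K : Finset (Set (Blowup k m)),
      (∀ S ∈ K, IsSmallMultisector r τ S) ∧
      (∀ L ⊆ K, L.Nonempty → (⋂ S ∈ L, S) = ∅ ∨ IsSmallMultisector r τ (⋂ S ∈ L, S)) ∧
      IsOpen (⋃ S ∈ K, S) ∧
      {p : Blowup k m | (∀ j, (p.1 j).2 = 0) ∧ p.2 = 0} ⊆ ⋃ S ∈ K, S) := by
  have hπ : (0:ℝ) < Real.pi := Real.pi_pos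
  constructor
  · rintro S ⟨a, b, r, W, hab, hr, hWo, hW0, hWc, rfl⟩
    refine ⟨isOpen_sector a b r hWo,
      ⟨⟨⟨fun j => (Circle.exp ((a j + b j) / 2), 0), 0⟩, ?_, hW0⟩,
        isPreconnected_sector a b r hWc⟩⟩
    intro j
    refine ⟨⟨(a j + b j) / 2, ⟨by linarith [hab j], by linarith [hab j]⟩, rfl⟩, ?_⟩
    simpa using hr j
  · intro r τ hr hτ
    classical
    have hmin : (0:ℝ) < min τ Real.pi := lt_min hτ hπ
    set ε : ℝ := min τ Real.pi / 2 with hεdef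
    have hε0 : 0 < ε := by positivity
    have hετ : ε < τ := by
      have := min_le_left τ Real.pi; rw [hεdef]; linarith
    have hεπ : ε < Real.pi := by
      have := min_le_right τ Real.pi; rw [hεdef]; linarith
    set N : ℕ := ⌈4 * Real.pi / ε⌉₊ with hN
    set ρ : Fin k → ℝ := fun _ => r / 2 with hρ
    set W : Set (Fin m → ℂ) := Metric.ball 0 (r / 2) with hWdef
    have hWo : IsOpen W := Metric.isOpen_ball
    have hW0 : (0 : Fin m → ℂ) ∈ W := Metric.mem_ball_self (by positivity)
    have hWc : IsPreconnected W := (convex_ball (0 : Fin m → ℂ) (r / 2)).isPreconnected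
    have hsmall : ∀ a b : Fin k → ℝ, (∀ j, a j < b j) → (∀ j, b j - a j < τ) →
        IsSmallMultisector r τ (Sector a b ρ W) := by
      intro a b h1 h2
      refine ⟨a, b, ρ, W, h1, fun j => by rw [hρ]; positivity, hWo, hW0, hWc, h2,
        fun j => by rw [hρ]; simpa using half_lt_self hr, fun x hx => ?_, rfl⟩
      have := mem_ball_zero_iff.1 hx
      linarith
    set K : Finset (Set (Blowup k m)) := Finset.image
      (fun c : Fin k → Fin N => Sector (fun j => ((c j : ℕ) : ℝ) * (ε / 2))
        (fun j => ((c j : ℕ) : ℝ) * (ε / 2) + ε) ρ W) Finset.univ with hK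
    refine ⟨K, ?_, ?_, ?_, ?_⟩
    · intro S hS
      rw [hK, Finset.mem_image] at hS
      obtain ⟨c, -, rfl⟩ := hS
      exact hsmall _ _ (fun j => by linarith) (fun j => by linarith)
    · intro L hLK hLne
      have hmem : ∀ S ∈ L, ∃ a b : Fin k → ℝ,
          (∀ j, a j < b j ∧ b j - a j ≤ ε) ∧ S = Sector a b ρ W := by
        intro S hS
        have := hLK hS
        rw [hK, Finset.mem_image] at this
        obtain ⟨c, -, rfl⟩ := this
        exact ⟨_, _, fun j => ⟨by linarith, by linarith⟩, rfl⟩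
      rcases inter_sectors hεπ ρ W hLne hmem with h | ⟨a, b, hab, heq⟩
      · exact Or.inl h
      · refine Or.inr ?_
        rw [heq]
        exact hsmall a b (fun j => (hab j).1) (fun j => lt_of_le_of_lt (hab j).2 hετ)
    · refine isOpen_biUnion fun S hS => ?_
      have hS' : S ∈ K := hS
      rw [hK, Finset.mem_image] at hS'
      obtain ⟨c, -, rfl⟩ := hS'
      exact isOpen_sector _ _ _ hWo
    · rintro p ⟨hp1, hp2⟩
      choose θ hθmem hθeq using fun j : Fin k => exists_theta ((p.1 j).1)
      choose i hiN hi1 hi2 using fun j : Fin k => exists_arc_index hε0 (hθmem j)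
      set c : Fin k → Fin N := fun j => ⟨i j, hiN j⟩ with hc
      refine Set.mem_biUnion (Finset.mem_image.2 ⟨c, Finset.mem_univ _, rfl⟩) ?_
      refine ⟨fun j => ⟨⟨θ j, ⟨hi1 j, hi2 j⟩, hθeq j⟩, ?_⟩, ?_⟩
      · rw [hp1 j, hρ]
        simpa using half_pos hr
      · rw [hp2]
        exact hW0
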